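/- arXiv:1401.4624 — 4 statements merged into one kernel-verified Lean document; each statement's English description precedes it below -/
import Mathlib

section
/- Let ν be a nonnegative Borel measure on ℝ^d and let α ∈ (0,2). Assume Orey's order condition: the limit lim_{ε→0+} ε^{α−2} ∫_{{z : ‖z‖ ≤ ε}} ‖z‖² dν(z) exists and equals some constant c₁ > 0. Then for every real p ≥ 2 there exist constants ε₀ > 0 and c₂ > 0 such that for all ε ∈ (0, ε₀), ∫_{{z : ‖z‖ ≤ ε}} ‖z‖^p dν(z) ≥ c₂ · ε^{p−α}. -/
open MeasureTheory Filter Set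

lemma rpow_le_aux {a c p : ℝ} (ha : 0 ≤ a) (hp : 2 ≤ p) (hc : 0 ≤ c) (hac : a ≤ c) :
    a ^ p ≤ c ^ (p - 2) * a ^ (2 : ℝ) := by
  rcases ha.eq_or_lt with h | h
  · rw [← h, Real.zero_rpow (by linarith)]
    positivity
  · have key : a ^ p = a ^ (p - 2) * a ^ (2 : ℝ) := by
      rw [← Real.rpow_add h]; ring_nf
    rw [key]
    exact mul_le_mul_of_nonneg_right (Real.rpow_le_rpow ha hac (by linarith))
      (Real.rpow_nonneg ha 2)

lemma rpow_ge_aux {a c p : ℝ} (hc : 0 ≤ c) (hp : 2 ≤ p) (hca : c ≤ a) :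
    c ^ (p - 2) * a ^ (2 : ℝ) ≤ a ^ p := by
  have ha : 0 ≤ a := hc.trans hca
  rcases ha.eq_or_lt with h | h
  · rw [← h, Real.zero_rpow (by norm_num : (2:ℝ) ≠ 0), Real.zero_rpow (by linarith : p ≠ 0)]
    simp
  · have key : a ^ p = a ^ (p - 2) * a ^ (2 : ℝ) := by
      rw [← Real.rpow_add h]; ring_nf
    rw [key]
    exact mul_le_mul_of_nonneg_right (Real.rpow_le_rpow hc hca (by linarith))
      (Real.rpow_nonneg ha 2)

/-- Under Orey's order condition of index `α ∈ (0,2)` for the measure `ν`,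
for every `p ≥ 2` one has `∫_{‖z‖ ≤ ε} ‖z‖^p dν ≥ c₂ ε^{p-α}` for small `ε`. -/
theorem orey_lower_bound (d : ℕ) (ν : Measure (EuclideanSpace ℝ (Fin d)))
    (α : ℝ) (hα : α ∈ Set.Ioo (0 : ℝ) 2) (c₁ : ℝ) (hc₁ : 0 < c₁)
    (horey : Tendsto
      (fun ε : ℝ => ε ^ (α - 2) *
        ∫ z in {z : EuclideanSpace ℝ (Fin d) | ‖z‖ ≤ ε}, ‖z‖ ^ (2 : ℝ) ∂ν)
      (nhdsWithin 0 (Set.Ioi 0)) (nhds c₁)) :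
    ∀ p : ℝ, 2 ≤ p → ∃ ε₀ > (0 : ℝ), ∃ c₂ > (0 : ℝ), ∀ ε ∈ Set.Ioo (0 : ℝ) ε₀,
      c₂ * ε ^ (p - α) ≤
        ∫ z in {z : EuclideanSpace ℝ (Fin d) | ‖z‖ ≤ ε}, ‖z‖ ^ p ∂ν := by
  intro p hp
  obtain ⟨hα0, hα2⟩ := hα
  set F : ℝ → ℝ := fun r => ∫ z in {z : EuclideanSpace ℝ (Fin d) | ‖z‖ ≤ r},
    ‖z‖ ^ (2 : ℝ) ∂ν with hFdef
  obtain ⟨ε₁, hε₁pos, hball⟩ := Metric.tendsto_nhdsWithin_nhds.mp horey (c₁/2) (by positivity)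
  -- choose δ
  set δ : ℝ := min (1/2) ((1/6 : ℝ) ^ (2-α)⁻¹) with hδdef
  have h2α : (0:ℝ) < 2 - α := by linarith
  have hδpos : 0 < δ := by
    apply lt_min (by norm_num)
    positivity
  have hδlt1 : δ < 1 := lt_of_le_of_lt (min_le_left _ _) (by norm_num)
  have hδpow : δ ^ (2-α) ≤ 1/6 := by
    calc δ ^ (2-α) ≤ ((1/6 : ℝ) ^ (2-α)⁻¹) ^ (2-α) :=
          Real.rpow_le_rpow hδpos.le (min_le_right _ _) h2α.le
    _ = 1/6 := Real.rpow_inv_rpow (by norm_num) h2α.ne'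
  -- bounds on F
  have keyF : ∀ r : ℝ, 0 < r → r < ε₁ →
      c₁/2 * r ^ (2-α) ≤ F r ∧ F r ≤ 3*c₁/2 * r ^ (2-α) := by
    intro r hr hrlt
    have h := hball (mem_Ioi.mpr hr) (by simpa [Real.dist_eq, abs_of_pos hr] using hrlt)
    rw [Real.dist_eq] at h
    have habs := abs_lt.mp h
    have hrpow : (0:ℝ) < r ^ (2-α) := Real.rpow_pos_of_pos hr _
    have hmul : r ^ (α-2) * r ^ (2-α) = 1 := by
      rw [← Real.rpow_add hr]; norm_num
    have hFr : F r = r ^ (2-α) * (r ^ (α-2) * F r) := by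
      rw [← mul_assoc, mul_comm (r ^ (2-α)) (r ^ (α-2)), hmul, one_mul]
    constructor
    · rw [hFr]
      nlinarith [habs.1]
    · rw [hFr]
      nlinarith [habs.2]
  refine ⟨ε₁, hε₁pos, δ ^ (p-2) * (c₁/4), by positivity, ?_⟩
  rintro ε ⟨hε, hεlt⟩
  have hSmeas : ∀ r : ℝ, MeasurableSet {z : EuclideanSpace ℝ (Fin d) | ‖z‖ ≤ r} :=
    fun r => (isClosed_le continuous_norm continuous_const).measurableSet
  have hFεlb := (keyF ε hε hεlt).1
  have hFεpos : 0 < F ε := lt_of_lt_of_le (by positivity) hFεlb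
  -- integrability of ‖z‖^2 on the ball
  have hint2 : IntegrableOn (fun z : EuclideanSpace ℝ (Fin d) => ‖z‖ ^ (2:ℝ))
      {z : EuclideanSpace ℝ (Fin d) | ‖z‖ ≤ ε} ν := by
    by_contra h
    have hz : F ε = 0 := integral_undef h
    rw [hz] at hFεpos
    exact lt_irrefl _ hFεpos
  -- integrability of ‖z‖^p on the ball
  have hcontp : Continuous (fun z : EuclideanSpace ℝ (Fin d) => ‖z‖ ^ p) :=
    continuous_norm.rpow_const (fun z => Or.inr (by linarith))
  have hintp : IntegrableOn (fun z : EuclideanSpace ℝ (Fin d) => ‖z‖ ^ p)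
      {z : EuclideanSpace ℝ (Fin d) | ‖z‖ ≤ ε} ν := by
    refine Integrable.mono (hint2.const_mul (ε ^ (p-2))) hcontp.aestronglyMeasurable ?_
    filter_upwards [ae_restrict_mem (hSmeas ε)] with z hz
    have h1 : ‖z‖ ^ p ≤ ε ^ (p-2) * ‖z‖ ^ (2:ℝ) := rpow_le_aux (norm_nonneg z) hp hε.le hz
    have h2 : (0:ℝ) ≤ ‖z‖ ^ p := Real.rpow_nonneg (norm_nonneg z) p
    have h3 : (0:ℝ) ≤ ε ^ (p-2) * ‖z‖ ^ (2:ℝ) := by positivity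
    rw [Real.norm_eq_abs, Real.norm_eq_abs, abs_of_nonneg h2, abs_of_nonneg h3]
    exact h1
  -- annulus
  set A : Set (EuclideanSpace ℝ (Fin d)) :=
    {z : EuclideanSpace ℝ (Fin d) | ‖z‖ ≤ ε} \ {z : EuclideanSpace ℝ (Fin d) | ‖z‖ ≤ δ*ε}
    with hAdef
  have hδε : 0 < δ * ε := by positivity
  have hdelt : δ * ε < ε₁ := by
    calc δ * ε < 1 * ε := by exact mul_lt_mul_of_pos_right hδlt1 hε
    _ = ε := one_mul ε
    _ < ε₁ := hεlt
  -- F(δε) small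
  have hFδε : F (δ*ε) ≤ c₁/4 * ε ^ (2-α) := by
    have h1 := (keyF (δ*ε) hδε hdelt).2
    have h2 : (δ*ε) ^ (2-α) = δ ^ (2-α) * ε ^ (2-α) := Real.mul_rpow hδpos.le hε.le
    have h3 : (0:ℝ) < ε ^ (2-α) := Real.rpow_pos_of_pos hε _
    calc F (δ*ε) ≤ 3*c₁/2 * ((δ*ε) ^ (2-α)) := h1
    _ = 3*c₁/2 * δ ^ (2-α) * ε ^ (2-α) := by rw [h2]; ring
    _ ≤ 3*c₁/2 * (1/6) * ε ^ (2-α) := by nlinarith [mul_le_mul_of_nonneg_right hδpow (le_of_lt h3), hc₁.le]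
    _ = c₁/4 * ε ^ (2-α) := by ring
  -- integral over annulus of ‖z‖^2
  have hAint : ∫ z in A, ‖z‖ ^ (2:ℝ) ∂ν = F ε - F (δ*ε) := by
    rw [hAdef]
    exact integral_diff (hSmeas (δ*ε)) hint2
      (fun z hz => le_trans hz (by nlinarith : δ*ε ≤ ε))
  have hAlb : c₁/4 * ε ^ (2-α) ≤ ∫ z in A, ‖z‖ ^ (2:ℝ) ∂ν := by
    rw [hAint]
    have : c₁/2 * ε ^ (2-α) ≤ F ε := hFεlb
    linarith
  -- compare on annulus
  have hint2A : IntegrableOn (fun z : EuclideanSpace ℝ (Fin d) => ‖z‖ ^ (2:ℝ)) A ν :=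
    hint2.mono_set diff_subset
  have hintpA : IntegrableOn (fun z : EuclideanSpace ℝ (Fin d) => ‖z‖ ^ p) A ν :=
    hintp.mono_set diff_subset
  have hAmeas : MeasurableSet A := (hSmeas ε).diff (hSmeas (δ*ε))
  have hcompare : (δ*ε) ^ (p-2) * ∫ z in A, ‖z‖ ^ (2:ℝ) ∂ν ≤ ∫ z in A, ‖z‖ ^ p ∂ν := by
    rw [← integral_const_mul]
    refine setIntegral_mono_on (hint2A.const_mul _) hintpA hAmeas ?_
    rintro z ⟨hz1, hz2⟩
    have hzge : δ*ε ≤ ‖z‖ := le_of_not_ge hz2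
    exact rpow_ge_aux hδε.le hp hzge
  have hmono : ∫ z in A, ‖z‖ ^ p ∂ν ≤
      ∫ z in {z : EuclideanSpace ℝ (Fin d) | ‖z‖ ≤ ε}, ‖z‖ ^ p ∂ν := by
    refine setIntegral_mono_set hintp ?_ (HasSubset.Subset.eventuallyLE diff_subset)
    exact Eventually.of_forall (fun z => Real.rpow_nonneg (norm_nonneg z) p)
  -- final computation
  have hfin : δ ^ (p-2) * (c₁/4) * ε ^ (p-α) =
      (δ*ε) ^ (p-2) * (c₁/4 * ε ^ (2-α)) := by
    rw [Real.mul_rpow hδpos.le hε.le]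
    rw [show (p:ℝ) - α = (p-2) + (2-α) by ring, Real.rpow_add hε]
    ring
  calc δ ^ (p-2) * (c₁/4) * ε ^ (p-α)
      = (δ*ε) ^ (p-2) * (c₁/4 * ε ^ (2-α)) := hfin
    _ ≤ (δ*ε) ^ (p-2) * ∫ z in A, ‖z‖ ^ (2:ℝ) ∂ν := by
        exact mul_le_mul_of_nonneg_left hAlb (Real.rpow_nonneg hδε.le _)
    _ ≤ ∫ z in A, ‖z‖ ^ p ∂ν := hcompare
    _ ≤ _ := hmono
end

section
/- Let Γ ⊆ ℝ^d be an open set containing the origin and Γ₀ := Γ \ {0}. Let κ : Γ₀ → (0,∞) be continuously differentiable, let U ⊆ Γ₀ be compact, and let v : [0,1] × Γ₀ → ℝ^d be such that for each t the map z ↦ v(t,z) is continuously differentiable, v and its spatial derivative ∇_z v are bounded uniformly in (t,z), and v(t,z) = 0 for all z ∉ U. Then there exist ε₀ > 0 and a constant C > 0 such that for all ε ∈ (0, ε₀), t ∈ [0,1] and z ∈ Γ₀: the point z + ε·v(t,z) lies in Γ₀, and the quantity γ_ε(t,z) := det(I + ε ∇_z v(t,z)) · κ(z + ε v(t,z)) /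 κ(z) satisfies |γ_ε(t,z) − 1| ≤ C ε · 1_U(z) (in particular γ_ε(t,z) = 1 whenever z ∉ U). -/
/-!
Off `U` the field `v t` vanishes on a neighbourhood of `z`, so the displacement and the
Jacobian are zero and `γ_ε = 1`. On `U`, the determinant is a polynomial, hence Lipschitz on a
ball around the identity, so `|det (I + ε A) - 1| ≤ C₁ ε` for `‖A‖ ≤ M`. Since `U` is compact,
some closed `δ`-thickening of it still lies in `Γ₀`, and there `κ` is Lipschitz and bounded
below by a positive constant, so `|κ w / κ z - 1| ≤ C₂ ‖w - z‖` for `z ∈ U`, `‖w - z‖ ≤ δ`.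
Once `ε M ≤ δ`, the displacement `ε v` stays in that thickening and the two estimates multiply
out to `O(ε)`.
-/

open Set Metric

theorem ContDiffOn.locallyLipschitzOn_of_isOpen {𝕂 E F : Type*} [RCLike 𝕂]
    [NormedAddCommGroup E] [NormedSpace 𝕂 E] [NormedAddCommGroup F] [NormedSpace 𝕂 F]
    {f : E → F} {s : Set E} (hs : IsOpen s) (hf : ContDiffOn 𝕂 1 f s) : LocallyLipschitzOn s f := by
  intro x hx
  obtain ⟨K, t, ht, hK⟩ := (hf.contDiffAt (hs.mem_nhds hx)).exists_lipschitzOnWith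
  exact ⟨K, t, mem_nhdsWithin_of_mem_nhds ht, hK⟩

theorem contDiff_det {𝕜 E : Type*} [NontriviallyNormedField 𝕜] [CompleteSpace 𝕜]
    [NormedAddCommGroup E] [NormedSpace 𝕜 E] [FiniteDimensional 𝕜 E] {n : WithTop ℕ∞} :
    ContDiff 𝕜 n fun A : E →L[𝕜] E => A.det := by
  classical
  let b := Module.finBasis 𝕜 E
  let entry (i j : Fin (Module.finrank 𝕜 E)) : (E →L[𝕜] E) →L[𝕜] 𝕜 :=
    LinearMap.toContinuousLinearMap
      ((b.coord i).comp (ContinuousLinearMap.apply 𝕜 E (b j)).toLinearMap)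
  have h : (fun A : E →L[𝕜] E => A.det) =
      fun A => ∑ σ : Equiv.Perm _, (Equiv.Perm.sign σ : 𝕜) * ∏ i, entry (σ i) i A := by
    funext A
    rw [ContinuousLinearMap.det, ← LinearMap.det_toMatrix b, Matrix.det_apply]
    simp [entry, LinearMap.toMatrix_apply, Units.smul_def]
  rw [h]
  fun_prop

theorem exists_abs_det_id_add_smul_sub_one_le {E : Type*} [NormedAddCommGroup E]
    [NormedSpace ℝ E] [FiniteDimensional ℝ E] (M : ℝ) :
    ∃ C ≥ (0 : ℝ), ∀ A : E →L[ℝ] E, ‖A‖ ≤ M → ∀ ε ∈ Icc (0 : ℝ) 1,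
      |LinearMap.det ((LinearMap.id : E →ₗ[ℝ] E) + ε • A.toLinearMap) - 1| ≤ C * ε := by
  obtain ⟨K, hK⟩ := (contDiff_det (𝕜 := ℝ) (E := E) (n := 1)).locallyLipschitz
    |>.locallyLipschitzOn.exists_lipschitzOnWith_of_compact (isCompact_closedBall 1 |M|)
  refine ⟨K * |M|, by positivity, fun A hA ε hε => ?_⟩
  have hsmul : ‖ε • A‖ ≤ ε * |M| := by
    rw [norm_smul, Real.norm_of_nonneg hε.1]
    exact mul_le_mul_of_nonneg_left (hA.trans (le_abs_self M)) hε.1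
  have hmem : 1 + ε • A ∈ closedBall (1 : E →L[ℝ] E) |M| := by
    rw [mem_closedBall, dist_eq_norm, add_sub_cancel_left]
    exact hsmul.trans (mul_le_of_le_one_left (abs_nonneg M) hε.2)
  have hlip := hK.dist_le_mul _ hmem _ (mem_closedBall_self (abs_nonneg M))
  have hdet_one : (1 : E →L[ℝ] E).det = 1 := LinearMap.det_id
  rw [dist_eq_norm, dist_eq_norm, add_sub_cancel_left, hdet_one, Real.norm_eq_abs] at hlip
  calc |LinearMap.det ((LinearMap.id : E →ₗ[ℝ] E) + ε • A.toLinearMap) - 1|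
      = |(1 + ε • A).det - 1| := rfl
    _ ≤ K * (ε * |M|) := hlip.trans (by gcongr)
    _ = K * |M| * ε := by ring

theorem abs_mul_sub_one_le {D r a b : ℝ} (hD : |D - 1| ≤ a) (hr : |r - 1| ≤ b) :
    |D * r - 1| ≤ a * (1 + b) + b := by
  have hr' : |r| ≤ 1 + b := by
    calc |r| = |1 + (r - 1)| := by ring_nf
      _ ≤ 1 + b := (abs_add_le _ _).trans (by rw [abs_one]; linarith)
  calc |D * r - 1| = |(D - 1) * r + (r - 1)| := by ring_nf
    _ ≤ |D - 1| * |r| + |r - 1| := by rw [← abs_mul]; exact abs_add_le _ _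
    _ ≤ a * (1 + b) + b := by gcongr; exact (abs_nonneg _).trans hD

theorem IsCompact.exists_abs_div_sub_one_le_mul_dist {E : Type*} [NormedAddCommGroup E]
    [NormedSpace ℝ E] [ProperSpace E] {f : E → ℝ} {s U : Set E} (hs : IsOpen s)
    (hf : ContDiffOn ℝ 1 f s) (hpos : ∀ x ∈ s, 0 < f x) (hU : IsCompact U) (hUs : U ⊆ s) :
    ∃ δ > (0 : ℝ), ∃ C ≥ (0 : ℝ), ∀ z ∈ U, ∀ w ∈ closedBall z δ,
      w ∈ s ∧ |f w / f z - 1| ≤ C * dist w z := by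
  obtain ⟨δ, hδ, hKs⟩ := hU.exists_cthickening_subset_open hs hUs
  have hK : IsCompact (cthickening δ U) := hU.cthickening
  obtain ⟨L, hL⟩ :=
    ((hf.locallyLipschitzOn_of_isOpen hs).mono hKs).exists_lipschitzOnWith_of_compact hK
  obtain ⟨m, hm, hmf⟩ :=
    hK.exists_forall_le' (hf.continuousOn.mono hKs) fun x hx => hpos x (hKs hx)
  refine ⟨δ, hδ, L / m, by positivity, fun z hz w hw => ?_⟩
  have hzK : z ∈ cthickening δ U := self_subset_cthickening U hz
  have hwK : w ∈ cthickening δ U := closedBall_subset_cthickening hz δ hw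
  have hfz : 0 < f z := hm.trans_le (hmf z hzK)
  refine ⟨hKs hwK, ?_⟩
  calc |f w / f z - 1| = |f w - f z| / f z := by
        rw [div_sub_one hfz.ne', abs_div, abs_of_pos hfz]
    _ ≤ L * dist w z / m := by
        gcongr
        · simpa [Real.dist_eq] using hL.dist_le_mul w hwK z hzK
        · exact hmf z hzK
    _ = L / m * dist w z := by ring

theorem fderiv_eq_zero_of_support_subset {𝕜 E F : Type*} [NontriviallyNormedField 𝕜]
    [NormedAddCommGroup E] [NormedSpace 𝕜 E] [NormedAddCommGroup F] [NormedSpace 𝕜 F]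
    {f : E → F} {U : Set E} (hU : IsClosed U) (hf : Function.support f ⊆ U) {z : E}
    (hz : z ∉ U) : fderiv 𝕜 f z = 0 :=
  fderiv_of_notMem_tsupport 𝕜 fun h => hz (closure_minimal hf hU h)

theorem gamma_eps_estimate_general (d : ℕ) (Γ : Set (EuclideanSpace ℝ (Fin d)))
    (hΓ : IsOpen Γ)
    (κ : EuclideanSpace ℝ (Fin d) → ℝ)
    (hκ : ContDiffOn ℝ 1 κ (Γ \ {0})) (hκpos : ∀ z ∈ Γ \ {0}, 0 < κ z)
    (U : Set (EuclideanSpace ℝ (Fin d))) (hU : IsCompact U) (hUΓ : U ⊆ Γ \ {0})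
    (v : ℝ → EuclideanSpace ℝ (Fin d) → EuclideanSpace ℝ (Fin d))
    (M : ℝ)
    (hvb : ∀ t ∈ Icc (0 : ℝ) 1, ∀ z ∈ Γ \ {0},
      ‖v t z‖ ≤ M ∧ ‖fderiv ℝ (v t) z‖ ≤ M)
    (hv0 : ∀ t ∈ Icc (0 : ℝ) 1, ∀ z ∉ U, v t z = 0) :
    ∃ ε₀ > (0 : ℝ), ∃ C > (0 : ℝ), ∀ ε ∈ Ioo (0 : ℝ) ε₀, ∀ t ∈ Icc (0 : ℝ) 1,
      ∀ z ∈ Γ \ {0},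
      z + ε • v t z ∈ Γ \ {0} ∧
      |LinearMap.det
          ((LinearMap.id : EuclideanSpace ℝ (Fin d) →ₗ[ℝ] EuclideanSpace ℝ (Fin d))
            + ε • (fderiv ℝ (v t) z).toLinearMap) *
        κ (z + ε • v t z) / κ z - 1|
        ≤ C * ε * U.indicator (fun _ => (1 : ℝ)) z := by
  obtain ⟨δ, hδ, C₂, hC₂, hκU⟩ :=
    hU.exists_abs_div_sub_one_le_mul_dist (hΓ.sdiff isClosed_singleton) hκ hκpos hUΓ
  obtain ⟨C₁, hC₁, hdet⟩ :=
    exists_abs_det_id_add_smul_sub_one_le (E := EuclideanSpace ℝ (Fin d)) M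
  refine ⟨min 1 (δ / (|M| + 1)), by positivity, C₁ * (1 + C₂ * δ) + C₂ * |M| + 1, by positivity,
    fun ε ⟨hε0, hεε₀⟩ t ht z hz => ?_⟩
  by_cases hzU : z ∈ U
  · have hε1 : ε ≤ 1 := hεε₀.le.trans (min_le_left _ _)
    have hεδ : ε * |M| ≤ δ := by
      have := hεε₀.trans_le (min_le_right _ _)
      rw [lt_div_iff₀ (by positivity)] at this
      nlinarith [abs_nonneg M]
    have hstep : dist (z + ε • v t z) z ≤ ε * |M| := by
      rw [dist_eq_norm, add_sub_cancel_left, norm_smul, Real.norm_of_nonneg hε0.le]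
      exact mul_le_mul_of_nonneg_left ((hvb t ht z hz).1.trans (le_abs_self M)) hε0.le
    obtain ⟨hmem, hratio⟩ := hκU z hzU _ (mem_closedBall.2 (hstep.trans hεδ))
    refine ⟨hmem, ?_⟩
    rw [indicator_of_mem hzU, mul_one, mul_div_assoc]
    calc _ ≤ C₁ * ε * (1 + C₂ * (ε * |M|)) + C₂ * (ε * |M|) :=
          abs_mul_sub_one_le (hdet _ (hvb t ht z hz).2 ε ⟨hε0.le, hε1⟩)
            (hratio.trans (by gcongr))
      _ ≤ C₁ * ε * (1 + C₂ * δ) + C₂ * (ε * |M|) := by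
          have := mul_nonneg hC₁ hε0.le
          gcongr
      _ ≤ (C₁ * (1 + C₂ * δ) + C₂ * |M| + 1) * ε := by nlinarith
  · have hvz : v t z = 0 := hv0 t ht z hzU
    have hfd : fderiv ℝ (v t) z = 0 := fderiv_eq_zero_of_support_subset hU.isClosed
      (Function.support_subset_iff'.2 (hv0 t ht)) hzU
    simp [hvz, hfd, hz, indicator_of_notMem hzU, (hκpos z hz).ne']

/-- For `v` supported in a compact set `U ⊆ Γ₀` with bounded `v, ∇v`, the perturbation
`z ↦ z + ε v(t,z)` stays in `Γ₀` and the Jacobian/density factor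
`γ_ε(t,z) = det(I + ε ∇v(t,z)) κ(z + ε v(t,z))/κ(z)` satisfies `|γ_ε - 1| ≤ C ε 1_U(z)`. -/
theorem gamma_eps_estimate (d : ℕ) (Γ : Set (EuclideanSpace ℝ (Fin d)))
    (hΓ : IsOpen Γ) (h0 : (0 : EuclideanSpace ℝ (Fin d)) ∈ Γ)
    (κ : EuclideanSpace ℝ (Fin d) → ℝ)
    (hκ : ContDiffOn ℝ 1 κ (Γ \ {0})) (hκpos : ∀ z ∈ Γ \ {0}, 0 < κ z)
    (U : Set (EuclideanSpace ℝ (Fin d))) (hU : IsCompact U) (hUΓ : U ⊆ Γ \ {0})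
    (v : ℝ → EuclideanSpace ℝ (Fin d) → EuclideanSpace ℝ (Fin d))
    (hv : ∀ t ∈ Icc (0 : ℝ) 1, ContDiffOn ℝ 1 (v t) (Γ \ {0}))
    (M : ℝ)
    (hvb : ∀ t ∈ Icc (0 : ℝ) 1, ∀ z ∈ Γ \ {0},
      ‖v t z‖ ≤ M ∧ ‖fderiv ℝ (v t) z‖ ≤ M)
    (hv0 : ∀ t ∈ Icc (0 : ℝ) 1, ∀ z ∉ U, v t z = 0) :
    ∃ ε₀ > (0 : ℝ), ∃ C > (0 : ℝ), ∀ ε ∈ Ioo (0 : ℝ) ε₀, ∀ t ∈ Icc (0 : ℝ) 1,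
      ∀ z ∈ Γ \ {0},
      z + ε • v t z ∈ Γ \ {0} ∧
      |LinearMap.det
          ((LinearMap.id : EuclideanSpace ℝ (Fin d) →ₗ[ℝ] EuclideanSpace ℝ (Fin d))
            + ε • (fderiv ℝ (v t) z).toLinearMap) *
        κ (z + ε • v t z) / κ z - 1|
        ≤ C * ε * U.indicator (fun _ => (1 : ℝ)) z :=
  gamma_eps_estimate_general d Γ hΓ κ hκ hκpos U hU hUΓ v M hvb hv0
end

section
/- Let Γ₀ := {z ∈ ℝ^d : 0 < ‖z‖ < 1}. Let κ : Γ₀ → (0,∞) be twice continuously differentiable satisfying ‖∇ log κ(z)‖ ≤ C₁ ‖z‖^{−1} and ‖∇² log κ(z)‖ ≤ C₂ ‖z‖^{−2} for all z ∈ Γ₀, and let ζ : ℝ^d → [0,∞) be twice continuously differentiable with ζ(z) = ‖z‖³ for ‖z‖ ≤ 1/4 and ζ(z) = 0 for ‖z‖ > 1/2. Define η : Γ₀ → ℝ^d by η(z) := ∇ζ(z) + ζ(z) ∇ log κ(z). Then there exists a constant C > 0 such that ‖∇η(z)‖ · ζ(z) ≤ C ‖z‖⁴ for all z ∈ Γ₀,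 where ∇η(z) denotes the Jacobian matrix of η at z. -/
/-!
Near the origin `ζ = ‖·‖³`, so `ζ`, `Dζ` and `D∇ζ` are `O(‖z‖³)`, `O(‖z‖²)` and `O(‖z‖)` there;
by compactness these bounds persist up to `‖z‖ ≤ 1/2`, beyond which `ζ` vanishes. The product
rule `Dη = D∇ζ + ζ D∇log κ + ∇ζ ⊗ ∇log κ` together with the bounds on `∇ log κ` and
`∇² log κ` then gives `‖Dη(z)‖ = O(‖z‖)`, and multiplying by `ζ(z) = O(‖z‖³)` yields `O(‖z‖⁴)`.
-/

open Metric InnerProductSpace Topology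

theorem ContDiffAt.gradient {E : Type*} [NormedAddCommGroup E] [InnerProductSpace ℝ E]
    [CompleteSpace E] {f : E → ℝ} {x : E} {m n : WithTop ℕ∞}
    (hf : ContDiffAt ℝ n f x) (hmn : m + 1 ≤ n) : ContDiffAt ℝ m (gradient f) x :=
  (toDual ℝ E).symm.toContinuousLinearEquiv.contDiff.contDiffAt.comp x (hf.fderiv_right hmn)

section ProductRule

variable {E F : Type*} [NormedAddCommGroup E] [NormedSpace ℝ E]
  [NormedAddCommGroup F] [NormedSpace ℝ F] {f : E → ℝ} {g : E → F} {x : E}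

theorem norm_fderiv_smul_le (hf : DifferentiableAt ℝ f x) (hg : DifferentiableAt ℝ g x) :
    ‖fderiv ℝ (fun w => f w • g w) x‖ ≤ |f x| * ‖fderiv ℝ g x‖ + ‖fderiv ℝ f x‖ * ‖g x‖ := by
  rw [fderiv_fun_smul hf hg]
  refine (norm_add_le _ _).trans_eq ?_
  rw [norm_smul, Real.norm_eq_abs, ContinuousLinearMap.norm_smulRight_apply]

theorem norm_fderiv_norm_smul_self_le (hx : DifferentiableAt ℝ (‖·‖) x) :
    ‖fderiv ℝ (fun w : E => ‖w‖ • w) x‖ ≤ 2 * ‖x‖ :=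
  calc ‖fderiv ℝ (fun w : E => ‖w‖ • w) x‖
      ≤ |‖x‖| * ‖fderiv ℝ id x‖ + ‖fderiv ℝ (‖·‖) x‖ * ‖x‖ :=
        norm_fderiv_smul_le hx differentiableAt_id
    _ ≤ ‖x‖ * 1 + 1 * ‖x‖ := by
        rw [abs_norm, fderiv_id]
        gcongr
        · exact ContinuousLinearMap.norm_id_le
        · simpa using norm_fderiv_le_of_lipschitz ℝ (lipschitzWith_one_norm (E := E))
    _ = 2 * ‖x‖ := by ring

end ProductRule

section NormCube

variable {E : Type*} [NormedAddCommGroup E] [InnerProductSpace ℝ E]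

theorem norm_fderiv_norm_pow_three (x : E) :
    ‖fderiv ℝ (fun w : E => ‖w‖ ^ 3) x‖ = 3 * ‖x‖ ^ 2 := by
  have h := norm_fderiv_norm_id_rpow x (p := 3) (by norm_num)
  norm_num at h
  exact_mod_cast h

variable [CompleteSpace E]

theorem hasGradientAt_norm_pow_three (x : E) :
    HasGradientAt (fun w : E => ‖w‖ ^ 3) ((3 * ‖x‖) • x) x := by
  have h := hasFDerivAt_norm_rpow x (p := 3) (by norm_num)
  norm_num at h
  rw [hasGradientAt_iff_hasFDerivAt, map_smul]
  exact h

theorem norm_fderiv_gradient_norm_pow_three_le {x : E} (hx : x ≠ 0) :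
    ‖fderiv ℝ (gradient fun w : E => ‖w‖ ^ 3) x‖ ≤ 6 * ‖x‖ := by
  have hgrad : (gradient fun w : E => ‖w‖ ^ 3) = fun w => (3 : ℝ) • (‖w‖ • w) := by
    ext1 w; rw [(hasGradientAt_norm_pow_three w).gradient, mul_smul]
  have hnorm : DifferentiableAt ℝ (‖·‖) x := differentiableAt_id.norm ℝ hx
  rw [hgrad, fderiv_fun_const_smul (hnorm.fun_smul differentiableAt_fun_id), norm_smul,
    Real.norm_of_nonneg zero_le_three]
  linarith [norm_fderiv_norm_smul_self_le hnorm]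

end NormCube

theorem exists_norm_le_mul_norm_pow_of_near_zero {E F : Type*} [NormedAddCommGroup E]
    [ProperSpace E] [NormedAddCommGroup F] {g : E → F} {r ρ c : ℝ} {k : ℕ}
    (hg : ContinuousOn g (closedBall 0 r)) (hρ : 0 < ρ)
    (hnear : ∀ z, 0 < ‖z‖ → ‖z‖ < ρ → ‖g z‖ ≤ c * ‖z‖ ^ k) :
    ∃ K ≥ 0, ∀ z, 0 < ‖z‖ → ‖z‖ ≤ r → ‖g z‖ ≤ K * ‖z‖ ^ k := by
  obtain ⟨M, hM⟩ := (isCompact_closedBall (0 : E) r).exists_bound_of_continuousOn hg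
  refine ⟨max (max c 0) (M / ρ ^ k), le_max_of_le_left (le_max_right _ _), fun z hz hzr => ?_⟩
  have hzK : z ∈ closedBall (0 : E) r := mem_closedBall_zero_iff.2 hzr
  rcases lt_or_ge ‖z‖ ρ with hzρ | hρz
  · calc ‖g z‖ ≤ c * ‖z‖ ^ k := hnear z hz hzρ
      _ ≤ max (max c 0) (M / ρ ^ k) * ‖z‖ ^ k := by gcongr; exact le_max_of_le_left (le_max_left _ _)
  · have hM0 : 0 ≤ M := (norm_nonneg _).trans (hM z hzK)
    calc ‖g z‖ ≤ M := hM z hzK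
      _ = M / ρ ^ k * ρ ^ k := by field_simp
      _ ≤ max (max c 0) (M / ρ ^ k) * ‖z‖ ^ k := by gcongr; exact le_max_right _ _

section CutOff

variable {E : Type*} [NormedAddCommGroup E] [InnerProductSpace ℝ E] [CompleteSpace E]
  [ProperSpace E] {ζ : E → ℝ} {ρ : ℝ}

theorem exists_bounds_of_eq_norm_pow_three_near_zero (hζ : ContDiff ℝ 2 ζ) (hρ : 0 < ρ)
    (hζeq : ∀ z, ‖z‖ < ρ → ζ z = ‖z‖ ^ 3) (r : ℝ) :
    ∃ K ≥ 0, ∀ z, 0 < ‖z‖ → ‖z‖ ≤ r →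
      |ζ z| ≤ K * ‖z‖ ^ 3 ∧ ‖fderiv ℝ ζ z‖ ≤ K * ‖z‖ ^ 2 ∧
        ‖fderiv ℝ (gradient ζ) z‖ ≤ K * ‖z‖ := by
  have hloc : ∀ z, ‖z‖ < ρ → ζ =ᶠ[𝓝 z] fun w => ‖w‖ ^ 3 := fun z hz =>
    (isOpen_ball.eventually_mem (mem_ball_zero_iff.2 hz)).mono fun w hw =>
      hζeq w (mem_ball_zero_iff.1 hw)
  have hgrad : ContDiff ℝ 1 (gradient ζ) :=
    contDiff_iff_contDiffAt.2 fun z => hζ.contDiffAt.gradient le_rfl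
  obtain ⟨K₀, hK₀, h₀⟩ := exists_norm_le_mul_norm_pow_of_near_zero (k := 3) (c := 1) (r := r)
    hζ.continuous.continuousOn hρ fun z _ hz => by
      rw [Real.norm_eq_abs, hζeq z hz, one_mul, abs_of_nonneg (by positivity)]
  obtain ⟨K₁, hK₁, h₁⟩ := exists_norm_le_mul_norm_pow_of_near_zero (k := 2) (c := 3) (r := r)
    (hζ.continuous_fderiv two_ne_zero).continuousOn hρ fun z _ hz => by
      rw [(hloc z hz).fderiv_eq, norm_fderiv_norm_pow_three]
  obtain ⟨K₂, hK₂, h₂⟩ := exists_norm_le_mul_norm_pow_of_near_zero (k := 1) (c := 6) (r := r)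
    (hgrad.continuous_fderiv one_ne_zero).continuousOn hρ fun z hz0 hz => by
      rw [(hloc z hz).gradient.fderiv_eq, pow_one]
      exact norm_fderiv_gradient_norm_pow_three_le (norm_pos_iff.1 hz0)
  refine ⟨max K₀ (max K₁ K₂), by positivity, fun z hz0 hzr => ⟨?_, ?_, ?_⟩⟩
  · calc |ζ z| ≤ K₀ * ‖z‖ ^ 3 := h₀ z hz0 hzr
      _ ≤ _ := by gcongr; exact le_max_left _ _
  · calc ‖fderiv ℝ ζ z‖ ≤ K₁ * ‖z‖ ^ 2 := h₁ z hz0 hzr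
      _ ≤ _ := by gcongr; exact le_max_of_le_right (le_max_left _ _)
  · calc ‖fderiv ℝ (gradient ζ) z‖ ≤ K₂ * ‖z‖ ^ 1 := h₂ z hz0 hzr
      _ ≤ _ := by rw [pow_one]; gcongr; exact le_max_of_le_right (le_max_right _ _)

end CutOff

theorem eta_jacobian_bound_general (d : ℕ)
    (κ : EuclideanSpace ℝ (Fin d) → ℝ) (C₁ C₂ : ℝ)
    (hκ : ContDiffOn ℝ 2 κ {z : EuclideanSpace ℝ (Fin d) | 0 < ‖z‖ ∧ ‖z‖ < 1})
    (hκpos : ∀ z ∈ {z : EuclideanSpace ℝ (Fin d) | 0 < ‖z‖ ∧ ‖z‖ < 1}, 0 < κ z)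
    (hκgrad : ∀ z ∈ {z : EuclideanSpace ℝ (Fin d) | 0 < ‖z‖ ∧ ‖z‖ < 1},
      ‖gradient (fun w => Real.log (κ w)) z‖ ≤ C₁ / ‖z‖)
    (hκhess : ∀ z ∈ {z : EuclideanSpace ℝ (Fin d) | 0 < ‖z‖ ∧ ‖z‖ < 1},
      ‖fderiv ℝ (fun w => gradient (fun u => Real.log (κ u)) w) z‖ ≤ C₂ / ‖z‖ ^ 2)
    (ζ : EuclideanSpace ℝ (Fin d) → ℝ) (hζ : ContDiff ℝ 2 ζ)
    (hζeq : ∀ z : EuclideanSpace ℝ (Fin d), ‖z‖ ≤ 1 / 4 → ζ z = ‖z‖ ^ 3)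
    (hζ0 : ∀ z : EuclideanSpace ℝ (Fin d), 1 / 2 < ‖z‖ → ζ z = 0) :
    ∃ C > (0 : ℝ), ∀ z ∈ {z : EuclideanSpace ℝ (Fin d) | 0 < ‖z‖ ∧ ‖z‖ < 1},
      ‖fderiv ℝ
          (fun w => gradient ζ w + ζ w • gradient (fun u => Real.log (κ u)) w) z‖
        * ζ z ≤ C * ‖z‖ ^ 4 := by
  obtain ⟨K, hK0, hK⟩ := exists_bounds_of_eq_norm_pow_three_near_zero hζ
    (by norm_num : (0 : ℝ) < 1 / 4) (fun z hz => hζeq z hz.le) (1 / 2)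
  set G := fun w => gradient (fun u => Real.log (κ u)) w
  set L := K + K * C₂ + K * C₁
  refine ⟨max (L * K) 1, by positivity, fun z hz => ?_⟩
  rcases lt_or_ge (1 / 2) ‖z‖ with hz_far | hz_near
  · rw [hζ0 z hz_far, mul_zero]
    positivity
  have hz0 : 0 < ‖z‖ := hz.1
  obtain ⟨hζz, hDζ, hD2ζ⟩ := hK z hz0 hz_near
  have hΓ₀ : IsOpen {z : EuclideanSpace ℝ (Fin d) | 0 < ‖z‖ ∧ ‖z‖ < 1} :=
    (isOpen_lt continuous_const continuous_norm).and (isOpen_lt continuous_norm continuous_const)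
  have hG : DifferentiableAt ℝ G z :=
    (((hκ.log fun w hw => (hκpos w hw).ne').contDiffAt (hΓ₀.mem_nhds hz)).gradient
      le_rfl).differentiableAt one_ne_zero
  have hDη : ‖fderiv ℝ (fun w => gradient ζ w + ζ w • G w) z‖ ≤ L * ‖z‖ := calc
    _ ≤ ‖fderiv ℝ (gradient ζ) z‖ + (|ζ z| * ‖fderiv ℝ G z‖ + ‖fderiv ℝ ζ z‖ * ‖G z‖) := by
        have hζd := hζ.differentiable two_ne_zero z
        rw [fderiv_fun_add ((hζ.contDiffAt.gradient le_rfl).differentiableAt one_ne_zero)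
          (hζd.fun_smul hG)]
        exact (norm_add_le _ _).trans (add_le_add_right (norm_fderiv_smul_le hζd hG) _)
    _ ≤ K * ‖z‖ + (K * ‖z‖ ^ 3 * (C₂ / ‖z‖ ^ 2) + K * ‖z‖ ^ 2 * (C₁ / ‖z‖)) := by
        gcongr
        exacts [hκhess z hz, hκgrad z hz]
    _ = L * ‖z‖ := by field_simp; ring
  calc _ ≤ ‖fderiv ℝ (fun w => gradient ζ w + ζ w • G w) z‖ * |ζ z| := by
        gcongr; exact le_abs_self _
    _ ≤ L * ‖z‖ * (K * ‖z‖ ^ 3) := mul_le_mul hDη hζz (abs_nonneg _) ((norm_nonneg _).trans hDη)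
    _ = L * K * ‖z‖ ^ 4 := by ring
    _ ≤ max (L * K) 1 * ‖z‖ ^ 4 := by gcongr; exact le_max_left _ _

/-- For `η(z) = ∇ζ(z) + ζ(z) ∇ log κ(z)` with `ζ(z) = ‖z‖³` near `0`, vanishing for
`‖z‖ > 1/2`, and `‖∇ log κ‖ ≤ C₁ ‖z‖⁻¹`, `‖∇² log κ‖ ≤ C₂ ‖z‖⁻²`, the Jacobian of `η`
satisfies `‖∇η(z)‖ ζ(z) ≤ C ‖z‖⁴` on `Γ₀`. -/
theorem eta_jacobian_bound (d : ℕ)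
    (κ : EuclideanSpace ℝ (Fin d) → ℝ) (C₁ C₂ : ℝ) (hC₁ : 0 < C₁) (hC₂ : 0 < C₂)
    (hκ : ContDiffOn ℝ 2 κ {z : EuclideanSpace ℝ (Fin d) | 0 < ‖z‖ ∧ ‖z‖ < 1})
    (hκpos : ∀ z ∈ {z : EuclideanSpace ℝ (Fin d) | 0 < ‖z‖ ∧ ‖z‖ < 1}, 0 < κ z)
    (hκgrad : ∀ z ∈ {z : EuclideanSpace ℝ (Fin d) | 0 < ‖z‖ ∧ ‖z‖ < 1},
      ‖gradient (fun w => Real.log (κ w)) z‖ ≤ C₁ / ‖z‖)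
    (hκhess : ∀ z ∈ {z : EuclideanSpace ℝ (Fin d) | 0 < ‖z‖ ∧ ‖z‖ < 1},
      ‖fderiv ℝ (fun w => gradient (fun u => Real.log (κ u)) w) z‖ ≤ C₂ / ‖z‖ ^ 2)
    (ζ : EuclideanSpace ℝ (Fin d) → ℝ) (hζ : ContDiff ℝ 2 ζ) (hζnn : ∀ z, 0 ≤ ζ z)
    (hζeq : ∀ z : EuclideanSpace ℝ (Fin d), ‖z‖ ≤ 1 / 4 → ζ z = ‖z‖ ^ 3)
    (hζ0 : ∀ z : EuclideanSpace ℝ (Fin d), 1 / 2 < ‖z‖ → ζ z = 0) :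
    ∃ C > (0 : ℝ), ∀ z ∈ {z : EuclideanSpace ℝ (Fin d) | 0 < ‖z‖ ∧ ‖z‖ < 1},
      ‖fderiv ℝ
          (fun w => gradient ζ w + ζ w • gradient (fun u => Real.log (κ u)) w) z‖
        * ζ z ≤ C * ‖z‖ ^ 4 :=
  eta_jacobian_bound_general d κ C₁ C₂ hκ hκpos hκgrad hκhess ζ hζ hζeq hζ0
end

section
/- Let Γ₀ := {z ∈ ℝ^d : 0 < ‖z‖ < 1}, let α ∈ (0,2), and let ν be a nonnegative Borel measure on Γ₀ with ∫_{Γ₀} ‖z‖² dν(z) < ∞ satisfying Orey's order condition: lim_{ε→0+} ε^{α−2} ∫_{{z : ‖z‖ ≤ ε}} ‖z‖² dν(z) = c₁ for some c₁ > 0. Let ζ : ℝ^d → [0,∞) be continuous with ζ(z) = ‖z‖³ for ‖z‖ ≤ 1/4. Then for every G > 0 there exist constants λ₀ ≥ 1 and c₀ > 0 such that for all λ ≥ λ₀ and all g ∈ [0, G], ∫_{Γ₀} (1 − e^{−λ g ζ(z)}) dν(z) ≥ c₀ · λ^{α/3} · g. -/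
open MeasureTheory Filter Set

/-- Chord bound: on `[0, G]`, `1 - exp (-x)` lies above the chord. -/
private lemma chord_bound {G x : ℝ} (hG : 0 < G) (hx0 : 0 ≤ x) (hxG : x ≤ G) :
    (1 - Real.exp (-G)) / G * x ≤ 1 - Real.exp (-x) := by
  have ht0 : 0 ≤ x / G := by positivity
  have ht1 : x / G ≤ 1 := by rw [div_le_one hG]; exact hxG
  have key := convexOn_exp.2 (Set.mem_univ (0 : ℝ)) (Set.mem_univ (-G))
    (by linarith : (0:ℝ) ≤ 1 - x / G) ht0 (by ring)
  simp only [smul_eq_mul, mul_zero, zero_add, Real.exp_zero, mul_one] at key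
  have hxg : x / G * (-G) = -x := by field_simp
  rw [hxg] at key
  -- key : Real.exp (-x) ≤ (1 - x/G) + x/G * Real.exp (-G)
  have hEG : 0 < Real.exp (-G) := Real.exp_pos _
  have h1 : (1 - Real.exp (-G)) / G * x = (1 - Real.exp (-G)) * (x / G) := by ring
  nlinarith [key]

set_option maxHeartbeats 1000000 in
/-- Under Orey's order condition of index `α` for the Lévy measure `ν` supported in
`Γ₀ = {0 < ‖z‖ < 1}`, with `ζ(z) = ‖z‖³` near `0`: for every `G > 0` there are
`λ₀ ≥ 1`, `c₀ > 0` with `∫_{Γ₀} (1 − e^{−λ g ζ(z)}) dν ≥ c₀ λ^{α/3} g` for all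
`λ ≥ λ₀` and `g ∈ [0, G]`. -/
theorem exp_moment_lower_bound (d : ℕ) (α : ℝ) (hα : α ∈ Set.Ioo (0 : ℝ) 2)
    (ν : Measure (EuclideanSpace ℝ (Fin d)))
    (hνsupp : ν {z : EuclideanSpace ℝ (Fin d) | ¬(0 < ‖z‖ ∧ ‖z‖ < 1)} = 0)
    (hν2 : IntegrableOn (fun z : EuclideanSpace ℝ (Fin d) => ‖z‖ ^ 2)
      {z : EuclideanSpace ℝ (Fin d) | 0 < ‖z‖ ∧ ‖z‖ < 1} ν)
    (c₁ : ℝ) (hc₁ : 0 < c₁)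
    (horey : Tendsto
      (fun ε : ℝ => ε ^ (α - 2) *
        ∫ z in {z : EuclideanSpace ℝ (Fin d) | ‖z‖ ≤ ε}, ‖z‖ ^ 2 ∂ν)
      (nhdsWithin 0 (Set.Ioi 0)) (nhds c₁))
    (ζ : EuclideanSpace ℝ (Fin d) → ℝ) (hζc : Continuous ζ) (hζnn : ∀ z, 0 ≤ ζ z)
    (hζeq : ∀ z : EuclideanSpace ℝ (Fin d), ‖z‖ ≤ 1 / 4 → ζ z = ‖z‖ ^ 3) :
    ∀ G > (0 : ℝ), ∃ lam₀ ≥ (1 : ℝ), ∃ c₀ > (0 : ℝ), ∀ lam ≥ lam₀,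
      ∀ g ∈ Set.Icc (0 : ℝ) G,
      c₀ * lam ^ (α / 3) * g ≤
        ∫ z in {z : EuclideanSpace ℝ (Fin d) | 0 < ‖z‖ ∧ ‖z‖ < 1},
          (1 - Real.exp (-(lam * g * ζ z))) ∂ν := by
  obtain ⟨hα0, hα2⟩ := hα
  intro G hG
  set Γ₀ : Set (EuclideanSpace ℝ (Fin d)) := {z | 0 < ‖z‖ ∧ ‖z‖ < 1} with hΓ₀def
  have hΓmeas : MeasurableSet Γ₀ :=
    (measurableSet_lt measurable_const continuous_norm.measurable).inter
      (measurableSet_lt continuous_norm.measurable measurable_const)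
  -- the square function is integrable on the whole space
  have hIntUniv : Integrable (fun z : EuclideanSpace ℝ (Fin d) => ‖z‖ ^ 2) ν := by
    have h0 : IntegrableOn (fun z : EuclideanSpace ℝ (Fin d) => ‖z‖ ^ 2) Γ₀ᶜ ν := by
      have : ν Γ₀ᶜ = 0 := hνsupp
      unfold IntegrableOn
      rw [Measure.restrict_eq_zero.mpr this]
      exact integrable_zero_measure
    have := hν2.union h0
    rwa [Set.union_compl_self, integrableOn_univ] at this
  -- constants
  set θ : ℝ := (2 : ℝ) ^ (α - 2) with hθdef
  have hθ0 : 0 < θ := Real.rpow_pos_of_pos two_pos _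
  have hθ1 : θ < 1 := Real.rpow_lt_one_of_one_lt_of_neg one_lt_two (by linarith)
  set δ : ℝ := c₁ * (1 - θ) / (2 * (1 + θ)) with hδdef
  have hδpos : 0 < δ := by
    apply div_pos (by nlinarith) (by nlinarith)
  have hδc₁ : δ < c₁ := by
    rw [hδdef, div_lt_iff₀ (by nlinarith)]
    nlinarith
  obtain ⟨ε₀, hε₀pos, hε₀⟩ := Metric.tendsto_nhdsWithin_nhds.mp horey δ hδpos
  have hOrey : ∀ x : ℝ, 0 < x → x < ε₀ →
      c₁ - δ < x ^ (α - 2) * ∫ z in {z : EuclideanSpace ℝ (Fin d) | ‖z‖ ≤ x}, ‖z‖ ^ 2 ∂ν ∧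
      x ^ (α - 2) * (∫ z in {z : EuclideanSpace ℝ (Fin d) | ‖z‖ ≤ x}, ‖z‖ ^ 2 ∂ν) < c₁ + δ := by
    intro x hx hxe
    have h := hε₀ (Set.mem_Ioi.mpr hx)
      (by rw [Real.dist_eq, sub_zero, abs_of_pos hx]; exact hxe)
    rw [Real.dist_eq, abs_lt] at h
    exact ⟨by linarith [h.1], by linarith [h.2]⟩
  set κ : ℝ := (1 - Real.exp (-G)) / G with hκdef
  have hκpos : 0 < κ := by
    apply div_pos _ hG
    have : Real.exp (-G) < Real.exp 0 := Real.exp_lt_exp.mpr (by linarith)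
    rw [Real.exp_zero] at this; linarith
  set c₂ : ℝ := c₁ * (1 - θ) / 2 with hc₂def
  have hc₂pos : 0 < c₂ := by apply div_pos (by nlinarith); norm_num
  refine ⟨max 1 (max 64 ((2 / ε₀) ^ 3)), le_max_left _ _, κ * c₂ / 2, by positivity, ?_⟩
  intro lam hlam g hg
  obtain ⟨hg0, hgG⟩ := hg
  have hlam1 : (1 : ℝ) ≤ lam := le_trans (le_max_left _ _) hlam
  have hlam0 : (0 : ℝ) < lam := by linarith
  set ε : ℝ := lam ^ (-(1/3) : ℝ) with hεdef
  have hεpos : 0 < ε := Real.rpow_pos_of_pos hlam0 _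
  have hε3 : ε ^ (3 : ℕ) = lam⁻¹ := by
    rw [hεdef, ← Real.rpow_natCast (lam ^ (-(1/3) : ℝ)) 3, ← Real.rpow_mul hlam0.le]
    norm_num
    rw [Real.rpow_neg hlam0.le, Real.rpow_one]
  -- auxiliary: lam ≥ b^3 with b > 0 implies ε ≤ b⁻¹
  have haux : ∀ b : ℝ, 0 < b → b ^ 3 ≤ lam → ε ≤ b⁻¹ := by
    intro b hb hble
    have h1 : b ≤ lam ^ ((1/3 : ℝ)) := by
      have h := Real.rpow_le_rpow (by positivity) hble (by norm_num : (0:ℝ) ≤ 1/3)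
      rw [← Real.rpow_natCast b 3, ← Real.rpow_mul hb.le] at h
      norm_num at h
      exact h
    have h2 : ε = (lam ^ ((1/3 : ℝ)))⁻¹ := by
      rw [hεdef, ← Real.rpow_neg hlam0.le]
    rw [h2]
    exact inv_anti₀ hb h1
  have hε14 : ε ≤ 1 / 4 := by
    have := haux 4 (by norm_num) (by
      have := le_trans (le_max_left (64:ℝ) ((2/ε₀)^3)) (le_trans (le_max_right _ _) hlam)
      norm_num at this ⊢; linarith)
    simpa using this
  have hεε₀ : ε < ε₀ := by
    have h2e : (0:ℝ) < 2 / ε₀ := by positivity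
    have := haux (2 / ε₀) h2e (le_trans (le_max_right (64:ℝ) _) (le_trans (le_max_right _ _) hlam))
    have h3 : (2 / ε₀)⁻¹ = ε₀ / 2 := by field_simp
    rw [h3] at this
    linarith
  -- Orey's estimates at ε and ε/2
  have hEpos : (0:ℝ) < ε ^ ((2:ℝ) - α) := Real.rpow_pos_of_pos hεpos _
  have hApos : (0:ℝ) < ε ^ (α - 2) := Real.rpow_pos_of_pos hεpos _
  have hAE : ε ^ (α - 2) * ε ^ ((2:ℝ) - α) = 1 := by
    rw [← Real.rpow_add hεpos]; norm_num
  obtain ⟨hlow', _⟩ := hOrey ε hεpos hεε₀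
  obtain ⟨_, hhigh'⟩ := hOrey (ε/2) (by linarith) (by linarith)
  set Iε : ℝ := ∫ z in {z : EuclideanSpace ℝ (Fin d) | ‖z‖ ≤ ε}, ‖z‖ ^ 2 ∂ν with hIεdef
  set Iε2 : ℝ := ∫ z in {z : EuclideanSpace ℝ (Fin d) | ‖z‖ ≤ ε/2}, ‖z‖ ^ 2 ∂ν with hIε2def
  have hlow : (c₁ - δ) * ε ^ ((2:ℝ) - α) ≤ Iε := by
    have h := mul_le_mul_of_nonneg_right hlow'.le hEpos.le
    calc (c₁ - δ) * ε ^ ((2:ℝ) - α) ≤ ε ^ (α - 2) * Iε * ε ^ ((2:ℝ) - α) := h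
      _ = (ε ^ (α - 2) * ε ^ ((2:ℝ) - α)) * Iε := by ring
      _ = Iε := by rw [hAE, one_mul]
  have hhalf : ((ε/2 : ℝ)) ^ ((2:ℝ) - α) = θ * ε ^ ((2:ℝ) - α) := by
    rw [Real.div_rpow hεpos.le (by norm_num : (0:ℝ) ≤ 2), div_eq_mul_inv,
      ← Real.rpow_neg (by norm_num : (0:ℝ) ≤ 2), neg_sub, hθdef]
    ring
  have hhigh : Iε2 ≤ (c₁ + δ) * θ * ε ^ ((2:ℝ) - α) := by
    have hA2pos : (0:ℝ) < (ε/2) ^ (α - 2) := Real.rpow_pos_of_pos (by linarith) _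
    have hE2pos : (0:ℝ) < (ε/2) ^ ((2:ℝ) - α) := Real.rpow_pos_of_pos (by linarith) _
    have hAE2 : (ε/2) ^ (α - 2) * (ε/2) ^ ((2:ℝ) - α) = 1 := by
      rw [← Real.rpow_add (by linarith : (0:ℝ) < ε/2)]; norm_num
    have h := mul_le_mul_of_nonneg_right hhigh'.le hE2pos.le
    calc Iε2 = ((ε/2) ^ (α - 2) * (ε/2) ^ ((2:ℝ) - α)) * Iε2 := by rw [hAE2, one_mul]
      _ = (ε/2) ^ (α - 2) * Iε2 * (ε/2) ^ ((2:ℝ) - α) := by ring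
      _ ≤ (c₁ + δ) * (ε/2) ^ ((2:ℝ) - α) := h
      _ = (c₁ + δ) * θ * ε ^ ((2:ℝ) - α) := by rw [hhalf]; ring
  have hcoef : c₁ - δ - (c₁ + δ) * θ = c₂ := by
    rw [hδdef, hc₂def]; field_simp; ring
  have hgap : c₂ * ε ^ ((2:ℝ) - α) ≤ Iε - Iε2 := by
    calc c₂ * ε ^ ((2:ℝ) - α) = (c₁ - δ - (c₁ + δ) * θ) * ε ^ ((2:ℝ) - α) := by rw [hcoef]
      _ = (c₁ - δ) * ε ^ ((2:ℝ) - α) - (c₁ + δ) * θ * ε ^ ((2:ℝ) - α) := by ring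
      _ ≤ Iε - Iε2 := by linarith
  -- the annulus
  set S : Set (EuclideanSpace ℝ (Fin d)) :=
    {z | ‖z‖ ≤ ε} \ {z | ‖z‖ ≤ ε/2} with hSdef
  have hmeasε : ∀ r : ℝ, MeasurableSet {z : EuclideanSpace ℝ (Fin d) | ‖z‖ ≤ r} :=
    fun r => measurableSet_le continuous_norm.measurable measurable_const
  have hSmeas : MeasurableSet S := (hmeasε ε).diff (hmeasε (ε/2))
  have hSsub : S ⊆ Γ₀ := by
    rintro z ⟨hz1, hz2⟩
    simp only [Set.mem_setOf_eq, not_le] at hz1 hz2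
    exact ⟨lt_of_le_of_lt (by positivity) hz2, lt_of_le_of_lt hz1 (by linarith)⟩
  have hSint : ∫ z in S, ‖z‖ ^ 2 ∂ν = Iε - Iε2 := by
    rw [hSdef]
    exact integral_diff (hmeasε (ε/2)) hIntUniv.integrableOn
      (fun z (hz : ‖z‖ ≤ ε/2) => hz.trans (by linarith [hεpos]))
  -- pointwise estimates
  have hexp_le : ∀ x : ℝ, 0 ≤ x → 1 - Real.exp (-x) ≤ x := by
    intro x hx; have := Real.add_one_le_exp (-x); linarith
  have hnn : ∀ z, 0 ≤ 1 - Real.exp (-(lam * g * ζ z)) := by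
    intro z
    have h0 : 0 ≤ lam * g * ζ z := mul_nonneg (mul_nonneg hlam0.le hg0) (hζnn z)
    have : Real.exp (-(lam * g * ζ z)) ≤ 1 := Real.exp_le_one_iff.mpr (by linarith)
    linarith
  -- integrability of the integrand on Γ₀
  have hfc : Continuous fun z : EuclideanSpace ℝ (Fin d) =>
      1 - Real.exp (-(lam * g * ζ z)) :=
    continuous_const.sub (Real.continuous_exp.comp ((continuous_const.mul hζc).neg))
  have hIntf : IntegrableOn (fun z : EuclideanSpace ℝ (Fin d) =>
      1 - Real.exp (-(lam * g * ζ z))) Γ₀ ν := by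
    refine Integrable.mono' (hν2.const_mul (lam * G + 16)) hfc.aestronglyMeasurable ?_
    filter_upwards [ae_restrict_mem hΓmeas] with z hz
    obtain ⟨hz0, hz1⟩ := hz
    rw [Real.norm_eq_abs, abs_of_nonneg (hnn z)]
    rcases le_or_gt ‖z‖ (1/4) with hle | hlt
    · have h1 : 1 - Real.exp (-(lam * g * ζ z)) ≤ lam * g * ζ z :=
        hexp_le _ (by have := hζnn z; positivity)
      have h2 : ζ z = ‖z‖ ^ 3 := hζeq z hle
      have h3 : ‖z‖ ^ 3 ≤ ‖z‖ ^ 2 := by nlinarith [norm_nonneg z]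
      have hlg : 0 ≤ lam * g := mul_nonneg hlam0.le hg0
      have h4 : lam * g * ζ z ≤ lam * G * ‖z‖ ^ 2 := by
        rw [h2]
        calc lam * g * ‖z‖ ^ 3 ≤ lam * g * ‖z‖ ^ 2 := mul_le_mul_of_nonneg_left h3 hlg
          _ ≤ lam * G * ‖z‖ ^ 2 := mul_le_mul_of_nonneg_right
              (mul_le_mul_of_nonneg_left hgG hlam0.le) (pow_nonneg (norm_nonneg z) 2)
      have h5 : (0:ℝ) ≤ 16 * ‖z‖ ^ 2 := by positivity
      nlinarith
    · have h1 : 1 - Real.exp (-(lam * g * ζ z)) ≤ 1 := by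
        have := Real.exp_pos (-(lam * g * ζ z)); linarith
      have h2 : (1:ℝ) ≤ 16 * ‖z‖ ^ 2 := by nlinarith
      have h3 : (0:ℝ) ≤ lam * G * ‖z‖ ^ 2 := by positivity
      nlinarith
  -- pointwise lower bound on S
  have hpt : ∀ z ∈ S, κ * lam * g * (ε/2) * ‖z‖ ^ 2 ≤ 1 - Real.exp (-(lam * g * ζ z)) := by
    rintro z ⟨hz1, hz2⟩
    simp only [Set.mem_setOf_eq, not_le] at hz1 hz2
    have hζz : ζ z = ‖z‖ ^ 3 := hζeq z (le_trans hz1 hε14)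
    have hx0 : 0 ≤ lam * g * ‖z‖ ^ 3 := by positivity
    have hxG : lam * g * ‖z‖ ^ 3 ≤ G := by
      have h1 : ‖z‖ ^ 3 ≤ ε ^ 3 := by
        apply pow_le_pow_left₀ (norm_nonneg z) hz1
      have h2 : lam * g * ‖z‖ ^ 3 ≤ lam * G * ε ^ 3 :=
        calc lam * g * ‖z‖ ^ 3 ≤ lam * g * ε ^ 3 :=
              mul_le_mul_of_nonneg_left h1 (mul_nonneg hlam0.le hg0)
          _ ≤ lam * G * ε ^ 3 := mul_le_mul_of_nonneg_right
              (mul_le_mul_of_nonneg_left hgG hlam0.le) (pow_nonneg hεpos.le 3)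
      have h3 : lam * G * ε ^ 3 = G := by
        rw [hε3]; field_simp
      linarith
    have hchord := chord_bound hG hx0 hxG
    rw [hζz]
    have h4 : κ * lam * g * (ε/2) * ‖z‖ ^ 2 ≤ κ * (lam * g * ‖z‖ ^ 3) := by
      have h5 : (ε/2) * ‖z‖ ^ 2 ≤ ‖z‖ ^ 3 := by
        calc (ε/2) * ‖z‖ ^ 2 ≤ ‖z‖ * ‖z‖ ^ 2 :=
              mul_le_mul_of_nonneg_right hz2.le (pow_nonneg (norm_nonneg z) 2)
          _ = ‖z‖ ^ 3 := by ring
      have h6 := mul_le_mul_of_nonneg_left h5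
        (mul_nonneg (mul_nonneg hκpos.le hlam0.le) hg0)
      calc κ * lam * g * (ε/2) * ‖z‖ ^ 2 = κ * lam * g * ((ε/2) * ‖z‖ ^ 2) := by ring
        _ ≤ κ * lam * g * ‖z‖ ^ 3 := h6
        _ = κ * (lam * g * ‖z‖ ^ 3) := by ring
    calc κ * lam * g * (ε/2) * ‖z‖ ^ 2 ≤ κ * (lam * g * ‖z‖ ^ 3) := h4
      _ ≤ 1 - Real.exp (-(lam * g * ‖z‖ ^ 3)) := hchord
  -- key exponent identity
  have hkey : lam * ε ^ ((3:ℝ) - α) = lam ^ (α / 3) := by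
    rw [hεdef, ← Real.rpow_mul hlam0.le]
    nth_rewrite 1 [show lam = lam ^ (1:ℝ) from (Real.rpow_one lam).symm]
    rw [← Real.rpow_add hlam0]
    norm_num
    ring_nf
  have hεε : ε * ε ^ ((2:ℝ) - α) = ε ^ ((3:ℝ) - α) := by
    nth_rewrite 1 [show ε = ε ^ (1:ℝ) from (Real.rpow_one ε).symm]
    rw [← Real.rpow_add hεpos, show (1:ℝ) + (2 - α) = 3 - α by ring]
  -- assemble
  calc κ * c₂ / 2 * lam ^ (α / 3) * g
      = (κ * lam * g * (ε/2)) * (c₂ * ε ^ ((2:ℝ) - α)) := by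
        rw [← hkey, ← hεε]; ring
    _ ≤ (κ * lam * g * (ε/2)) * (Iε - Iε2) := by
        apply mul_le_mul_of_nonneg_left hgap
        positivity
    _ = (κ * lam * g * (ε/2)) * ∫ z in S, ‖z‖ ^ 2 ∂ν := by rw [hSint]
    _ = ∫ z in S, (κ * lam * g * (ε/2)) * ‖z‖ ^ 2 ∂ν := (integral_const_mul _ _).symm
    _ ≤ ∫ z in S, (1 - Real.exp (-(lam * g * ζ z))) ∂ν := by
        apply setIntegral_mono_on
        · exact (hIntUniv.integrableOn.const_mul _ :)
        · exact hIntf.mono_set hSsub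
        · exact hSmeas
        · exact hpt
    _ ≤ ∫ z in Γ₀, (1 - Real.exp (-(lam * g * ζ z))) ∂ν := by
        apply setIntegral_mono_set hIntf
        · exact Filter.Eventually.of_forall fun z => hnn z
        · exact (hSsub).eventuallyLE
end
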